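/- Let N ≥ 1, α > 0, and let P be an N×N real row-stochastic matrix with P_{ij} ≥ α for all i, j (so P is constant in time). Then for every x₀ ∈ ℝ^N, the solution x(t) = exp(−t(I − P)) x₀ of the consensus flow ẋ = −(I − P)x satisfies diam(x(t)) ≤ e^{−2αt} · diam(x₀) for all t ≥ 0, where diam(x) := max_i x_i − min_i x_i. -/

import Mathlib

/-!
Since `-(t(I - P)) = -t I + tP` with commuting summands, `exp(-t(I - P)) = e^{-t} Σ_k (t^k/k!) P^k`.
One application of a row-stochastic `P` with entries `≥ α` contracts the diameter by `1 - 2α`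
(each coordinate of `Px` puts weight `≥ α` on both the minimum and the maximum of `x`, so it
stays `α · diam x` away from each end), and the diameter is a seminorm, so it contracts
`Σ_k (t^k/k!) P^k` by `Σ_k (t^k/k!) (1 - 2α)^k = e^{t(1-2α)}`.
Multiplying by `e^{-t}` gives `e^{-2αt}`. When `N ≤ 1` every diameter vanishes; otherwise `2α ≤ 1`.
-/

open Matrix BigOperators

/-- The diameter of a vector: `diam x = max_i x_i − min_i x_i`. -/
noncomputable def vecDiam {N : ℕ} (x : Fin N → ℝ) : ℝ := (⨆ i, x i) - (⨅ i, x i)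

open scoped Nat

theorem dotProduct_le_sub_mul {ι : Type*} [Fintype ι] {w y : ι → ℝ} {α S : ℝ}
    (hw : ∀ k, 0 ≤ w k) (hsum : ∑ k, w k = 1) (hy : ∀ k, y k ≤ S) (m : ι) (hm : α ≤ w m) :
    w ⬝ᵥ y ≤ S - α * (S - y m) := by
  have hgap : w m * (S - y m) ≤ ∑ k, w k * (S - y k) :=
    Finset.single_le_sum (f := fun k => w k * (S - y k))
      (fun k _ => mul_nonneg (hw k) (sub_nonneg.2 (hy k))) (Finset.mem_univ m)
  have hsplit : w ⬝ᵥ y = S - ∑ k, w k * (S - y k) := by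
    simp only [dotProduct, mul_sub, Finset.sum_sub_distrib, ← Finset.sum_mul, hsum, one_mul]
    ring
  have hα_gap : α * (S - y m) ≤ w m * (S - y m) :=
    mul_le_mul_of_nonneg_right hm (sub_nonneg.2 (hy m))
  linarith

variable {N : ℕ}

theorem sub_le_vecDiam (x : Fin N → ℝ) (i j : Fin N) : x i - x j ≤ vecDiam x :=
  sub_le_sub (le_ciSup (Set.finite_range x).bddAbove i) (ciInf_le (Set.finite_range x).bddBelow j)

theorem vecDiam_le_of_forall_sub_le [Nonempty (Fin N)] {x : Fin N → ℝ} {B : ℝ}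
    (h : ∀ i j, x i - x j ≤ B) : vecDiam x ≤ B := by
  have hsup : ⨆ i, x i ≤ B + ⨅ j, x j := ciSup_le fun i => by
    have : x i - B ≤ ⨅ j, x j := le_ciInf fun j => by linarith [h i j]
    linarith
  unfold vecDiam
  linarith

theorem vecDiam_eq_zero [Subsingleton (Fin N)] (x : Fin N → ℝ) : vecDiam x = 0 := by
  cases isEmpty_or_nonempty (Fin N) with
  | inl _ => simp [vecDiam]
  | inr h =>
    obtain ⟨i⟩ := h
    rw [vecDiam, ciSup_subsingleton i, ciInf_subsingleton i, sub_self]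

theorem vecDiam_smul {r : ℝ} (hr : 0 ≤ r) (x : Fin N → ℝ) : vecDiam (r • x) = r * vecDiam x := by
  simp only [vecDiam, Pi.smul_apply, smul_eq_mul, ← Real.mul_iSup_of_nonneg hr,
    ← Real.mul_iInf_of_nonneg hr, mul_sub]

theorem vecDiam_mulVec_le {α : ℝ} (hα : 0 ≤ α) {P : Matrix (Fin N) (Fin N) ℝ}
    (hrow : ∀ i, ∑ j, P i j = 1) (hpos : ∀ i j, α ≤ P i j) (x : Fin N → ℝ) :
    vecDiam (P *ᵥ x) ≤ (1 - 2 * α) * vecDiam x := by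
  cases isEmpty_or_nonempty (Fin N) with
  | inl _ => simp [vecDiam_eq_zero]
  | inr _ =>
    obtain ⟨imin, himin⟩ := exists_eq_ciInf_of_finite (f := x)
    obtain ⟨imax, himax⟩ := exists_eq_ciSup_of_finite (f := x)
    have hnonneg : ∀ i j, 0 ≤ P i j := fun i j => hα.trans (hpos i j)
    refine vecDiam_le_of_forall_sub_le fun i j => ?_
    have hupper := dotProduct_le_sub_mul (hnonneg i) (hrow i)
      (fun k => le_ciSup (Set.finite_range x).bddAbove k) imin (hpos i imin)
    have hlower := dotProduct_le_sub_mul (y := -x) (hnonneg j) (hrow j)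
      (fun k => neg_le_neg (ciInf_le (Set.finite_range x).bddBelow k)) imax (hpos j imax)
    simp only [dotProduct_neg, Pi.neg_apply] at hlower
    simp only [mulVec, vecDiam]
    rw [himin] at hupper
    rw [himax] at hlower
    linarith

theorem vecDiam_pow_mulVec_le {c : ℝ} (hc : 0 ≤ c) {M : Matrix (Fin N) (Fin N) ℝ}
    (hM : ∀ y, vecDiam (M *ᵥ y) ≤ c * vecDiam y) (x : Fin N → ℝ) (k : ℕ) :
    vecDiam (M ^ k *ᵥ x) ≤ c ^ k * vecDiam x := by
  induction k with
  | zero => simp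
  | succ k ih =>
    calc vecDiam (M ^ (k + 1) *ᵥ x) = vecDiam (M *ᵥ (M ^ k *ᵥ x)) := by
          rw [pow_succ', mulVec_mulVec]
      _ ≤ c * (c ^ k * vecDiam x) := (hM _).trans (mul_le_mul_of_nonneg_left ih hc)
      _ = c ^ (k + 1) * vecDiam x := by ring

theorem hasSum_exp_smul_mulVec (M : Matrix (Fin N) (Fin N) ℝ) (t : ℝ) (x : Fin N → ℝ) :
    HasSum (fun k : ℕ => (t ^ k / k !) • (M ^ k *ᵥ x)) (NormedSpace.exp (t • M) *ᵥ x) := by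
  have h : HasSum (fun k : ℕ => (k !⁻¹ : ℝ) • (t • M) ^ k) (NormedSpace.exp (t • M)) := by
    open scoped Norms.Operator in exact NormedSpace.exp_series_hasSum_exp' (t • M)
  convert h.map (mulVec.addMonoidHomLeft x) (continuous_id.matrix_mulVec continuous_const) using 1
  · ext k : 1
    simp [smul_pow, smul_mulVec, smul_smul, div_eq_inv_mul, mulVec.addMonoidHomLeft]
  · rfl

theorem vecDiam_exp_smul_mulVec_le [Nonempty (Fin N)] {c t : ℝ} (hc : 0 ≤ c) (ht : 0 ≤ t)
    {M : Matrix (Fin N) (Fin N) ℝ} (hM : ∀ y, vecDiam (M *ᵥ y) ≤ c * vecDiam y)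
    (x : Fin N → ℝ) :
    vecDiam (NormedSpace.exp (t • M) *ᵥ x) ≤ Real.exp (t * c) * vecDiam x := by
  have hseries := Pi.hasSum.1 (hasSum_exp_smul_mulVec M t x)
  have hbound : HasSum (fun k : ℕ => (t * c) ^ k / k ! * vecDiam x)
      (Real.exp (t * c) * vecDiam x) := by
    rw [Real.exp_eq_exp_ℝ]
    exact (NormedSpace.expSeries_div_hasSum_exp (t * c)).mul_right _
  refine vecDiam_le_of_forall_sub_le fun i j =>
    hasSum_le (fun k => ?_) ((hseries i).sub (hseries j)) hbound
  have hk : 0 ≤ t ^ k / k ! := by positivity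
  calc (t ^ k / k !) • (M ^ k *ᵥ x) i - (t ^ k / k !) • (M ^ k *ᵥ x) j
        = t ^ k / k ! * ((M ^ k *ᵥ x) i - (M ^ k *ᵥ x) j) := by simp [mul_sub]
    _ ≤ t ^ k / k ! * (c ^ k * vecDiam x) := mul_le_mul_of_nonneg_left
          ((sub_le_vecDiam _ i j).trans (vecDiam_pow_mulVec_le hc hM x k)) hk
    _ = (t * c) ^ k / k ! * vecDiam x := by ring

theorem exp_neg_smul_one_sub (P : Matrix (Fin N) (Fin N) ℝ) (t : ℝ) :
    NormedSpace.exp (-(t • ((1 : Matrix (Fin N) (Fin N) ℝ) - P))) =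
      Real.exp (-t) • NormedSpace.exp (t • P) := by
  have hsplit : -(t • ((1 : Matrix (Fin N) (Fin N) ℝ) - P)) = algebraMap ℝ _ (-t) + t • P := by
    rw [Algebra.algebraMap_eq_smul_one]
    module
  have hscalar : NormedSpace.exp (algebraMap ℝ (Matrix (Fin N) (Fin N) ℝ) (-t)) =
      algebraMap ℝ _ (Real.exp (-t)) := by
    rw [Real.exp_eq_exp_ℝ]
    open scoped Norms.Operator in exact (NormedSpace.algebraMap_exp_comm (-t)).symm
  rw [hsplit, Matrix.exp_add_of_commute _ _ (Algebra.commute_algebraMap_left _ _), hscalar,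
    ← Algebra.smul_def]

theorem timeInvariant_consensus_diam_contraction_general
    (N : ℕ) (α : ℝ) (hα : 0 < α)
    (P : Matrix (Fin N) (Fin N) ℝ)
    (hrow : ∀ i, ∑ j, P i j = 1)
    (hpos : ∀ i j, α ≤ P i j)
    (x₀ : Fin N → ℝ) :
    ∀ t ≥ (0:ℝ),
      vecDiam ((NormedSpace.exp (-(t • ((1 : Matrix (Fin N) (Fin N) ℝ) - P)))).mulVec x₀) ≤
        Real.exp (-2 * α * t) * vecDiam x₀ := by
  intro t ht
  rcases subsingleton_or_nontrivial (Fin N) with _ | _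
  · simp [vecDiam_eq_zero]
  have hα_half : 2 * α ≤ 1 := by
    obtain ⟨j, j', hne⟩ := exists_pair_ne (Fin N)
    have := Finset.add_le_sum (fun k _ => hα.le.trans (hpos j k)) (Finset.mem_univ j)
      (Finset.mem_univ j') hne
    linarith [hpos j j, hpos j j', hrow j]
  have hflow := vecDiam_exp_smul_mulVec_le (by linarith) ht (vecDiam_mulVec_le hα.le hrow hpos) x₀
  rw [exp_neg_smul_one_sub, smul_mulVec, vecDiam_smul (Real.exp_pos _).le]
  calc Real.exp (-t) * vecDiam (NormedSpace.exp (t • P) *ᵥ x₀)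
      ≤ Real.exp (-t) * (Real.exp (t * (1 - 2 * α)) * vecDiam x₀) :=
        mul_le_mul_of_nonneg_left hflow (Real.exp_pos _).le
    _ = Real.exp (-2 * α * t) * vecDiam x₀ := by
        rw [← mul_assoc, ← Real.exp_add]
        ring_nf

/-- **Diameter contraction for time-invariant uniformly positive mixing.**
If `P` is row-stochastic with `P_{ij} ≥ α > 0`, then the solution
`x(t) = exp(−t(I − P)) x₀` of `ẋ = −(I − P)x` satisfies
`diam(x(t)) ≤ e^{−2αt} diam(x₀)` for all `t ≥ 0`. -/
theorem timeInvariant_consensus_diam_contraction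
    (N : ℕ) (hN : 1 ≤ N) (α : ℝ) (hα : 0 < α)
    (P : Matrix (Fin N) (Fin N) ℝ)
    (hrow : ∀ i, ∑ j, P i j = 1)
    (hpos : ∀ i j, α ≤ P i j)
    (x₀ : Fin N → ℝ) :
    ∀ t ≥ (0:ℝ),
      vecDiam ((NormedSpace.exp (-(t • ((1 : Matrix (Fin N) (Fin N) ℝ) - P)))).mulVec x₀) ≤
        Real.exp (-2 * α * t) * vecDiam x₀ :=
  timeInvariant_consensus_diam_contraction_general N α hα P hrow hpos x₀
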